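/- arXiv:2112.00696 — 2 statements merged into one kernel-verified Lean document; each statement's English description precedes it below -/
import Mathlib

section
/- Let C be a 2-dimensional proper copula. Then the function F defined on [0,∞]² by F(x,y) = -log(1 - C(1-exp(-x), 1-exp(-y))) is a Lévy copula on [0,∞]²: it is grounded, 2-increasing, has margins F(x,∞) = x and F(∞,y) = y, and F(∞,∞) = ∞. -/
open Set
open scoped ENNReal

/-- `mlog u = -log(1-u)` as a map `[0,1] → [0,∞]`, with the convention
`-log(0) = ∞`. -/
noncomputable def mlog (u : ℝ) : ℝ≥0∞ :=
  if u = 1 then ⊤ else ENNReal.ofReal (-Real.log (1 - u))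

/-- `mexp x = 1 - exp(-x)` as a map `[0,∞] → [0,1]`, with the convention
`1 - exp(-∞) = 1`. -/
noncomputable def mexp (x : ℝ≥0∞) : ℝ :=
  if x = ⊤ then 1 else 1 - Real.exp (-x.toReal)

lemma mexp_mem (x : ℝ≥0∞) : mexp x ∈ Icc (0:ℝ) 1 := by
  unfold mexp
  split
  · exact ⟨zero_le_one, le_refl 1⟩
  · constructor
    · have h : Real.exp (-x.toReal) ≤ 1 :=
        Real.exp_le_one_iff.mpr (neg_nonpos.mpr ENNReal.toReal_nonneg)
      linarith
    · have := Real.exp_pos (-x.toReal); linarith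

lemma mexp_zero : mexp 0 = 0 := by simp [mexp]

lemma mexp_top : mexp ⊤ = 1 := by simp [mexp]

lemma mexp_mono {a b : ℝ≥0∞} (h : a ≤ b) : mexp a ≤ mexp b := by
  by_cases hb : b = ⊤
  · rw [hb, mexp_top]; exact (mexp_mem a).2
  · have ha : a ≠ ⊤ := fun h' => hb (top_le_iff.mp (h' ▸ h))
    rw [mexp, mexp, if_neg ha, if_neg hb]
    have : a.toReal ≤ b.toReal := (ENNReal.toReal_le_toReal ha hb).mpr h
    have := Real.exp_le_exp.mpr (neg_le_neg this)
    linarith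

lemma mlog_zero : mlog 0 = 0 := by simp [mlog]

lemma mlog_mexp (x : ℝ≥0∞) : mlog (mexp x) = x := by
  by_cases hx : x = ⊤
  · subst hx; simp [mexp, mlog]
  · have h1 : mexp x ≠ 1 := by
      rw [mexp, if_neg hx]
      have := Real.exp_pos (-x.toReal); intro h; linarith [sub_eq_self.mp h ▸ this]
    rw [mlog, if_neg h1, mexp, if_neg hx,
      show (1 - (1 - Real.exp (-x.toReal))) = Real.exp (-x.toReal) by ring,
      Real.log_exp, neg_neg, ENNReal.ofReal_toReal hx]

lemma key_real (m s t M : ℝ) (hm0 : 0 ≤ m) (hms : m ≤ s) (hmt : m ≤ t)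
    (hsM : s ≤ M) (htM : t ≤ M) (hM1 : M < 1) (hsum : s + t ≤ M + m) :
    -Real.log (1 - s) + -Real.log (1 - t) ≤ -Real.log (1 - M) + -Real.log (1 - m) := by
  have h1 : (0:ℝ) < 1 - M := by linarith
  have hs : (0:ℝ) < 1 - s := by linarith
  have ht : (0:ℝ) < 1 - t := by linarith
  have hm : (0:ℝ) < 1 - m := by linarith
  have hprod : (1 - M) * (1 - m) ≤ (1 - s) * (1 - t) := by
    nlinarith [mul_nonneg hs.le (by linarith : (0:ℝ) ≤ M + m - s - t),
      mul_nonneg (by linarith : (0:ℝ) ≤ M - s) (by linarith : (0:ℝ) ≤ s - m)]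
  have hlog := Real.log_le_log (by positivity) hprod
  rw [Real.log_mul h1.ne' hm.ne', Real.log_mul hs.ne' ht.ne'] at hlog
  linarith

/-- If `C` is a 2-dimensional proper copula, then
`F(x,y) = -log(1 - C(1-exp(-x), 1-exp(-y)))` is a Lévy copula on `[0,∞]²`:
grounded, 2-increasing, with margins `F(x,∞) = x`, `F(∞,y) = y`, and
`F(∞,∞) = ∞`. -/
theorem stmt9
    (C : ℝ → ℝ → ℝ)
    (hrange : ∀ u ∈ Icc (0:ℝ) 1, ∀ v ∈ Icc (0:ℝ) 1, C u v ∈ Icc (0:ℝ) 1)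
    (hground : ∀ u ∈ Icc (0:ℝ) 1, C u 0 = 0 ∧ C 0 u = 0)
    (hinc : ∀ a₁ ∈ Icc (0:ℝ) 1, ∀ b₁ ∈ Icc (0:ℝ) 1, ∀ a₂ ∈ Icc (0:ℝ) 1, ∀ b₂ ∈ Icc (0:ℝ) 1,
      a₁ ≤ b₁ → a₂ ≤ b₂ → C a₁ b₂ + C b₁ a₂ ≤ C b₁ b₂ + C a₁ a₂)
    (hmarg : ∀ u ∈ Icc (0:ℝ) 1, C u 1 = u ∧ C 1 u = u) :
    let F : ℝ≥0∞ → ℝ≥0∞ → ℝ≥0∞ := fun x y => mlog (C (mexp x) (mexp y))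
    (∀ x : ℝ≥0∞, F x 0 = 0 ∧ F 0 x = 0) ∧
    (∀ a₁ b₁ a₂ b₂ : ℝ≥0∞, a₁ ≤ b₁ → a₂ ≤ b₂ →
      F a₁ b₂ + F b₁ a₂ ≤ F b₁ b₂ + F a₁ a₂) ∧
    (∀ x : ℝ≥0∞, F x ⊤ = x ∧ F ⊤ x = x) ∧
    F ⊤ ⊤ = ⊤ := by
  intro F
  have h01 : (0:ℝ) ∈ Icc (0:ℝ) 1 := ⟨le_refl 0, zero_le_one⟩
  have h11 : (1:ℝ) ∈ Icc (0:ℝ) 1 := ⟨zero_le_one, le_refl 1⟩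
  -- monotonicity of C in each coordinate
  have cmono1 : ∀ a ∈ Icc (0:ℝ) 1, ∀ b ∈ Icc (0:ℝ) 1, ∀ v ∈ Icc (0:ℝ) 1,
      a ≤ b → C a v ≤ C b v := by
    intro a ha b hb v hv hab
    have := hinc a ha b hb 0 h01 v hv hab hv.1
    have h1 := (hground a ha).1
    have h2 := (hground b hb).1
    linarith
  have cmono2 : ∀ u ∈ Icc (0:ℝ) 1, ∀ a ∈ Icc (0:ℝ) 1, ∀ b ∈ Icc (0:ℝ) 1,
      a ≤ b → C u a ≤ C u b := by
    intro u hu a ha b hb hab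
    have := hinc 0 h01 u hu a ha b hb hu.1 hab
    have h1 := (hground a ha).2
    have h2 := (hground b hb).2
    linarith
  refine ⟨?_, ?_, ?_, ?_⟩
  · intro x
    constructor
    · show mlog (C (mexp x) (mexp 0)) = 0
      rw [mexp_zero, (hground _ (mexp_mem x)).1, mlog_zero]
    · show mlog (C (mexp 0) (mexp x)) = 0
      rw [mexp_zero, (hground _ (mexp_mem x)).2, mlog_zero]
  · intro a₁ b₁ a₂ b₂ h1 h2
    show mlog (C (mexp a₁) (mexp b₂)) + mlog (C (mexp b₁) (mexp a₂)) ≤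
      mlog (C (mexp b₁) (mexp b₂)) + mlog (C (mexp a₁) (mexp a₂))
    set ua := mexp a₁ with hua
    set ub := mexp b₁ with hub
    set va := mexp a₂ with hva
    set vb := mexp b₂ with hvb
    have hua1 := mexp_mem a₁; rw [← hua] at hua1
    have hub1 := mexp_mem b₁; rw [← hub] at hub1
    have hva1 := mexp_mem a₂; rw [← hva] at hva1
    have hvb1 := mexp_mem b₂; rw [← hvb] at hvb1
    have hu : ua ≤ ub := mexp_mono h1
    have hv : va ≤ vb := mexp_mono h2
    set m := C ua va with hm
    set s := C ua vb with hs
    set t := C ub va with ht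
    set M := C ub vb with hM
    have hsum : s + t ≤ M + m := hinc ua hua1 ub hub1 va hva1 vb hvb1 hu hv
    have hms : m ≤ s := cmono2 ua hua1 va hva1 vb hvb1 hv
    have hmt : m ≤ t := cmono1 ua hua1 ub hub1 va hva1 hu
    have hsM : s ≤ M := cmono1 ua hua1 ub hub1 vb hvb1 hu
    have htM : t ≤ M := cmono2 ub hub1 va hva1 vb hvb1 hv
    have hmmem := hrange ua hua1 va hva1
    have hMmem := hrange ub hub1 vb hvb1
    by_cases hM1 : M = 1
    · have : mlog M = ⊤ := by rw [mlog, if_pos hM1]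
      rw [this, top_add]
      exact le_top
    · have hMlt : M < 1 := lt_of_le_of_ne hMmem.2 hM1
      have hslt : s < 1 := lt_of_le_of_lt hsM hMlt
      have htlt : t < 1 := lt_of_le_of_lt htM hMlt
      have hmlt : m < 1 := lt_of_le_of_lt hms hslt
      have nn : ∀ u : ℝ, 0 ≤ u → u < 1 → 0 ≤ -Real.log (1 - u) := by
        intro u h0 hu1
        have : Real.log (1 - u) ≤ 0 := Real.log_nonpos (by linarith) (by linarith)
        linarith
      have es : mlog s = ENNReal.ofReal (-Real.log (1 - s)) := by rw [mlog, if_neg hslt.ne]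
      have et : mlog t = ENNReal.ofReal (-Real.log (1 - t)) := by rw [mlog, if_neg htlt.ne]
      have eM : mlog M = ENNReal.ofReal (-Real.log (1 - M)) := by rw [mlog, if_neg hM1]
      have em : mlog m = ENNReal.ofReal (-Real.log (1 - m)) := by rw [mlog, if_neg hmlt.ne]
      rw [es, et, eM, em,
        ← ENNReal.ofReal_add (nn s (hmmem.1.trans hms) hslt) (nn t (hmmem.1.trans hmt) htlt),
        ← ENNReal.ofReal_add (nn M (hMmem.1) hMlt) (nn m hmmem.1 hmlt)]
      exact ENNReal.ofReal_le_ofReal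
        (key_real m s t M hmmem.1 hms hmt hsM htM hMlt hsum)
  · intro x
    constructor
    · show mlog (C (mexp x) (mexp ⊤)) = x
      rw [mexp_top, (hmarg _ (mexp_mem x)).1, mlog_mexp]
    · show mlog (C (mexp ⊤) (mexp x)) = x
      rw [mexp_top, (hmarg _ (mexp_mem x)).2, mlog_mexp]
  · show mlog (C (mexp ⊤) (mexp ⊤)) = ⊤
    rw [mexp_top, (hmarg _ h11).1, mlog, if_pos rfl]
end

section
/- Let X_n = R_n · S with R_1, R_2, ... i.i.d. with continuous cdf F_R on (0,∞), and S uniform on the unit simplex independent of the R_n. Say observation n is a record if R_n > R_k for all k < n. Then the probability that observation n is a record and falls in [x_1,∞)×⋯×[x_d,∞) equals ∫ max(0, 1 - (x_1+⋯+x_d)/r)^{d-1} F_R(r)^{n-1} dF_R(r), and the expected number of records in that set equals ∫ max(0, 1 - (x_1+⋯+x_d)/r)^{d-1} dF_R(r)/(1 - F_R(r)). -/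
open MeasureTheory Set ProbabilityTheory
open scoped ENNReal BigOperators

open Filter Topology

/-!
Conditionally on the radii, the survival function of the simplex gives
`P(x ≤ r S) = (1 - ∑ xᵢ / r)₊^(d-1)` for `r > 0`; the non-strict inequalities cost nothing
because this function is continuous and `S > 0` a.s.  Conditionally on `R_n = r`, the `n`
earlier radii are independent and all below `r` with probability `μ(-∞, r)^n = F(r)^n`, as `F`
is continuous.  Summing the geometric series gives the expected number of records; the set
`{F = 1}` is `μ`-null, so the real inverse `(1 - F r)⁻¹` takes its junk value `0⁻¹ = 0` only
on a null set.
-/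

section CDF

variable (μ : Measure ℝ) [IsProbabilityMeasure μ]

lemma nullSingletonClass_of_continuous_cdf (hcont : Continuous (cdf μ)) :
    NullSingletonClass μ where
  measure_singleton r := by
    rw [← measure_cdf μ, StieltjesFunction.measure_singleton,
      (cdf μ).mono.continuousWithinAt_Iio_iff_leftLim_eq.1 hcont.continuousWithinAt,
      sub_self, ENNReal.ofReal_zero]

lemma measure_Iio_eq_ofReal_cdf (hcont : Continuous (cdf μ)) (r : ℝ) :
    μ (Iio r) = ENNReal.ofReal (cdf μ r) := by
  have := nullSingletonClass_of_continuous_cdf μ hcont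
  rw [ofReal_cdf, measure_congr Iio_ae_eq_Iic]

lemma ae_cdf_lt_one (hcont : Continuous (cdf μ)) : ∀ᵐ r ∂μ, cdf μ r < 1 := by
  suffices μ {r | cdf μ r = 1} = 0 by
    filter_upwards [measure_eq_zero_iff_ae_notMem.1 this] with r hr
    exact (cdf_le_one μ r).lt_of_ne hr
  rcases eq_empty_or_nonempty {r | cdf μ r = 1} with hempty | hne
  · rw [hempty, measure_empty]
  obtain ⟨a, ha⟩ := eventually_atBot.1 ((tendsto_cdf_atBot μ).eventually (gt_mem_nhds one_pos))
  have hbdd : BddBelow {r | cdf μ r = 1} :=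
    ⟨a, fun r hr => le_of_not_ge fun hra => (ha r hra).ne hr⟩
  have hc : cdf μ (sInf {r | cdf μ r = 1}) = 1 :=
    (isClosed_eq hcont continuous_const).csInf_mem hne hbdd
  refine measure_mono_null (show _ ⊆ Ici _ from fun r hr => csInf_le hbdd hr) ?_
  rw [← compl_Iio, prob_compl_eq_one_sub measurableSet_Iio, measure_Iio_eq_ofReal_cdf μ hcont,
    hc, ENNReal.ofReal_one, tsub_self]

end CDF

lemma measure_forall_le_eq_of_forall_lt {Ω ι : Type*} [MeasurableSpace Ω] [Fintype ι]
    {P : Measure Ω} {S : Ω → ι → ℝ} (hSpos : ∀ᵐ ω ∂P, ∀ i, 0 < S ω i)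
    {G : (ι → ℝ) → ℝ≥0∞} (hG : Continuous G)
    (hlt : ∀ s : ι → ℝ, (∀ i, 0 ≤ s i) → P {ω | ∀ i, s i < S ω i} = G s)
    {s : ι → ℝ} (hs : ∀ i, 0 ≤ s i) :
    P {ω | ∀ i, s i ≤ S ω i} = G s := by
  let s' : ℕ → ι → ℝ := fun k i => max (s i - 1 / (k + 1)) 0
  have hs' : Tendsto s' atTop (𝓝 s) := by
    refine tendsto_pi_nhds.2 fun i => ?_
    have := (tendsto_const_nhds (x := s i)).sub
      (tendsto_one_div_add_atTop_nhds_zero_nat (𝕜 := ℝ))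
    simpa [s', max_eq_left (hs i)] using this.max (tendsto_const_nhds (x := (0 : ℝ)))
  refine le_antisymm (ge_of_tendsto' ((hG.tendsto s).comp hs') fun k => ?_) ?_
  · rw [Function.comp_apply, ← hlt _ fun i => le_max_right _ _]
    refine measure_mono_ae ?_
    filter_upwards [hSpos] with ω hω hle i
    have : (0 : ℝ) < 1 / (k + 1) := by positivity
    exact max_lt (by linarith [show s i ≤ S ω i from hle i]) (hω i)
  · rw [← hlt s hs]
    exact measure_mono fun ω h i => (h i).le

lemma ProbabilityTheory.IndepFun.lintegral_comp_prodMk_eq_lintegral_lintegral {Ω α β : Type*}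
    [MeasurableSpace Ω] [MeasurableSpace α] [MeasurableSpace β]
    {P : Measure Ω} [IsFiniteMeasure P] {X : Ω → α} {Y : Ω → β}
    (hXY : IndepFun X Y P) (hX : Measurable X) (hY : Measurable Y)
    {f : α × β → ℝ≥0∞} (hf : Measurable f) :
    ∫⁻ ω, f (X ω, Y ω) ∂P = ∫⁻ ω, ∫⁻ ω', f (X ω, Y ω') ∂P ∂P := by
  rw [← lintegral_map hf (hX.prodMk hY),
    (indepFun_iff_map_prod_eq_prod_map_map hX.aemeasurable hY.aemeasurable).1 hXY,
    lintegral_prod _ hf.aemeasurable, lintegral_map hf.lintegral_prod_right' hX]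
  exact lintegral_congr fun ω => lintegral_map (hf.comp measurable_prodMk_left) hY

lemma ProbabilityTheory.IndepFun.measure_prodMk_mem_eq_lintegral {Ω α β : Type*}
    [MeasurableSpace Ω] [MeasurableSpace α] [MeasurableSpace β]
    {P : Measure Ω} [IsFiniteMeasure P] {X : Ω → α} {Y : Ω → β}
    (hXY : IndepFun X Y P) (hX : Measurable X) (hY : Measurable Y)
    {C : Set (α × β)} (hC : MeasurableSet C) :
    P {ω | (X ω, Y ω) ∈ C} = ∫⁻ ω, P {ω' | (X ω, Y ω') ∈ C} ∂P := by
  have hmeasure : ∀ Z : Ω → α × β, Measurable Z →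
      P {ω | Z ω ∈ C} = ∫⁻ ω, C.indicator 1 (Z ω) ∂P :=
    fun Z hZ => (lintegral_indicator_one (hZ hC)).symm
  rw [hmeasure _ (hX.prodMk hY),
    hXY.lintegral_comp_prodMk_eq_lintegral_lintegral hX hY (measurable_one.indicator hC)]
  exact lintegral_congr fun ω => (hmeasure _ (measurable_const.prodMk hY)).symm

lemma ProbabilityTheory.iIndepFun.measure_forall_lt_eq_pow {Ω : Type*} [MeasurableSpace Ω]
    {P : Measure Ω} {R : ℕ → Ω → ℝ} (hRiid : iIndepFun R P) {μ : Measure ℝ}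
    (hRmeas : ∀ n, Measurable (R n)) (hident : ∀ n, Measure.map (R n) P = μ)
    (n : ℕ) (r : ℝ) :
    P {ω | ∀ k < n, R k ω < r} = μ (Iio r) ^ n := by
  have hset : {ω | ∀ k < n, R k ω < r} = ⋂ k ∈ Finset.range n, R k ⁻¹' Iio r := by
    ext ω; simp
  rw [hset, hRiid.measure_inter_preimage_eq_mul _ fun _ _ => measurableSet_Iio]
  simp_rw [← Measure.map_apply (hRmeas _) measurableSet_Iio, hident]
  rw [Finset.prod_const, Finset.card_range]

lemma lintegral_indicator_record_eq {Ω : Type*} [MeasurableSpace Ω] {P : Measure Ω}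
    [IsFiniteMeasure P] {R : ℕ → Ω → ℝ} (hRmeas : ∀ n, Measurable (R n))
    (hRiid : iIndepFun R P) {μ : Measure ℝ} (hident : ∀ n, Measure.map (R n) P = μ)
    (n : ℕ) {h : ℝ → ℝ≥0∞} (hh : Measurable h) :
    ∫⁻ ω, {ω | ∀ k < n, R k ω < R n ω}.indicator (fun ω => h (R n ω)) ω ∂P =
      ∫⁻ r, h r * μ (Iio r) ^ n ∂μ := by
  set V : Ω → Finset.range n → ℝ := fun ω k => R k ω
  have hV : Measurable V := measurable_pi_lambda _ fun k => hRmeas k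
  have hRV : IndepFun (R n) V P :=
    (hRiid.indepFun_finset {n} (Finset.range n) (by simp) hRmeas).comp
      (measurable_pi_apply (⟨n, Finset.mem_singleton_self n⟩ : ({n} : Finset ℕ)))
      measurable_id
  set D : Set (ℝ × (Finset.range n → ℝ)) := {p | ∀ k, p.2 k < p.1}
  have hD : MeasurableSet D := by
    simp only [D, ofPred_forall]
    exact .iInter fun k => measurableSet_lt (by fun_prop) (by fun_prop)
  have hpreimage : ∀ r, V ⁻¹' {z | ∀ k, z k < r} = {ω | ∀ k < n, R k ω < r} := by
    intro r; ext ω; simp [V]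
  calc ∫⁻ ω, {ω | ∀ k < n, R k ω < R n ω}.indicator (fun ω => h (R n ω)) ω ∂P
      = ∫⁻ ω, D.indicator (fun p => h p.1) (R n ω, V ω) ∂P := by
        refine lintegral_congr fun ω => ?_
        simp only [indicator_apply, D, mem_ofPred_eq]
        exact if_congr (Set.ext_iff.1 (hpreimage (R n ω)) ω).symm rfl rfl
    _ = ∫⁻ ω, ∫⁻ ω', D.indicator (fun p => h p.1) (R n ω, V ω') ∂P ∂P :=
      hRV.lintegral_comp_prodMk_eq_lintegral_lintegral (hRmeas n) hV
        ((hh.comp measurable_fst).indicator hD)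
    _ = ∫⁻ ω, h (R n ω) * μ (Iio (R n ω)) ^ n ∂P := by
      refine lintegral_congr fun ω => ?_
      have hslice : MeasurableSet {z : Finset.range n → ℝ | ∀ k, z k < R n ω} := by
        simp only [ofPred_forall]
        exact .iInter fun k => measurableSet_lt (by fun_prop) (by fun_prop)
      rw [← hRiid.measure_forall_lt_eq_pow hRmeas hident, ← hpreimage,
        ← lintegral_indicator_const (hV hslice)]
      rfl
    _ = ∫⁻ r, h r * μ (Iio r) ^ n ∂μ := by
      have hmono : Monotone fun r => μ (Iio r) := fun a b hab => measure_mono (Iio_subset_Iio hab)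
      rw [← lintegral_map (f := fun r => h r * μ (Iio r) ^ n)
        (hh.mul (hmono.measurable.pow_const n)) (hRmeas n), hident n]

lemma measure_record_and_mem_eq_lintegral {Ω β : Type*} [MeasurableSpace Ω] [MeasurableSpace β]
    {P : Measure Ω} [IsFiniteMeasure P] {R : ℕ → Ω → ℝ} (hRmeas : ∀ n, Measurable (R n))
    (hRiid : iIndepFun R P) {μ : Measure ℝ} (hident : ∀ n, Measure.map (R n) P = μ)
    {S : Ω → β} (hSmeas : Measurable S) (hindep : IndepFun S (fun ω n => R n ω) P)
    (n : ℕ) {B : Set (ℝ × β)} (hB : MeasurableSet B) :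
    P {ω | (∀ k < n, R k ω < R n ω) ∧ (R n ω, S ω) ∈ B} =
      ∫⁻ r, P {ω | (r, S ω) ∈ B} * μ (Iio r) ^ n ∂μ := by
  have hh : Measurable fun r => P {ω | (r, S ω) ∈ B} := by
    convert measurable_measure_prodMk_left (ν := P.map S) hB using 2 with r
    rw [Measure.map_apply hSmeas (measurable_prodMk_left hB)]
    rfl
  set C : Set ((ℕ → ℝ) × β) := {p | (∀ k < n, p.1 k < p.1 n) ∧ (p.1 n, p.2) ∈ B}
  have hC : MeasurableSet C := by
    simp only [C, ofPred_and, ofPred_forall]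
    exact (MeasurableSet.iInter fun k => .iInter fun _ =>
      measurableSet_lt (by fun_prop) (by fun_prop)).inter (hB.preimage (by fun_prop))
  calc P {ω | (∀ k < n, R k ω < R n ω) ∧ (R n ω, S ω) ∈ B}
      = P {ω | ((fun k => R k ω), S ω) ∈ C} := rfl
    _ = ∫⁻ ω, P {ω' | ((fun k => R k ω), S ω') ∈ C} ∂P :=
      hindep.symm.measure_prodMk_mem_eq_lintegral (measurable_pi_lambda _ hRmeas) hSmeas hC
    _ = ∫⁻ ω, {ω | ∀ k < n, R k ω < R n ω}.indicator
          (fun ω => P {ω' | (R n ω, S ω') ∈ B}) ω ∂P := by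
      refine lintegral_congr fun ω => ?_
      by_cases hrec : ω ∈ {ω | ∀ k < n, R k ω < R n ω}
      · rw [indicator_of_mem hrec]
        exact congrArg P (ext fun ω' => and_iff_right hrec)
      · rw [indicator_of_notMem hrec]
        exact measure_mono_null (fun ω' h => (hrec h.1).elim) measure_empty
    _ = ∫⁻ r, P {ω | (r, S ω) ∈ B} * μ (Iio r) ^ n ∂μ :=
      lintegral_indicator_record_eq hRmeas hRiid hident n hh

lemma measure_forall_le_mul_eq_ofReal {Ω ι : Type*} [MeasurableSpace Ω] [Fintype ι]
    {P : Measure Ω} [IsProbabilityMeasure P] {S : Ω → ι → ℝ} (hS : Measurable S) {m : ℕ}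
    (hsimplex : ∀ s : ι → ℝ, (∀ i, 0 ≤ s i) →
      P {ω | ∀ i, s i < S ω i} = ENNReal.ofReal (max 0 (1 - ∑ i, s i) ^ m))
    {x : ι → ℝ} (hx : ∀ i, 0 ≤ x i) {t : ℝ} (ht : 0 < t) :
    P {ω | ∀ i, x i ≤ t * S ω i} = ENNReal.ofReal (max 0 (1 - (∑ i, x i) / t) ^ m) := by
  have hSpos : ∀ᵐ ω ∂P, ∀ i, 0 < S ω i := by
    refine (ae_iff_measure_eq ?_).2 ?_
    · simp only [ofPred_forall]
      exact (MeasurableSet.iInter fun i =>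
        measurableSet_lt (by fun_prop) (by fun_prop)).nullMeasurableSet
    · simpa using hsimplex 0 fun _ => le_rfl
  have hbox : {ω | ∀ i, x i ≤ t * S ω i} = {ω | ∀ i, x i / t ≤ S ω i} := by
    ext ω
    exact forall_congr' fun i => by rw [div_le_iff₀ ht, mul_comm]
  rw [hbox, measure_forall_le_eq_of_forall_lt hSpos
    (G := fun s => ENNReal.ofReal (max 0 (1 - ∑ i, s i) ^ m))
    (ENNReal.continuous_ofReal.comp (by fun_prop)) hsimplex
    fun i => div_nonneg (hx i) ht.le, Finset.sum_div]

lemma tsum_ofReal_mul_pow {a q : ℝ} (ha : 0 ≤ a) (hq : 0 ≤ q) (hq1 : q < 1) :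
    ∑' n : ℕ, ENNReal.ofReal (a * q ^ n) = ENNReal.ofReal (a * (1 - q)⁻¹) := by
  rw [← ENNReal.ofReal_tsum_of_nonneg (fun n => by positivity)
    ((summable_geometric_of_lt_one hq hq1).mul_left a), tsum_mul_left,
    tsum_geometric_of_lt_one hq hq1]

theorem stmt16_general (d : ℕ)
    {Ω : Type*} [MeasurableSpace Ω] (P : Measure Ω) [IsProbabilityMeasure P]
    (R : ℕ → Ω → ℝ) (hRmeas : ∀ n, Measurable (R n))
    (hRiid : iIndepFun R P)
    (μ : Measure ℝ) (hident : ∀ n, Measure.map (R n) P = μ)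
    (hpos : ∀ n ω, 0 < R n ω)
    (F : ℝ → ℝ) (hF : ∀ r, F r = (μ (Iic r)).toReal) (hFcont : Continuous F)
    (S : Ω → Fin d → ℝ) (hSmeas : Measurable S)
    (hindep : IndepFun S (fun ω => fun n => R n ω) P)
    (hsimplex : ∀ s : Fin d → ℝ, (∀ i, 0 ≤ s i) →
      P {ω | ∀ i, s i < S ω i} = ENNReal.ofReal (max 0 (1 - ∑ i, s i) ^ (d - 1)))
    (x : Fin d → ℝ) (hx : ∀ i, 0 ≤ x i) :
    (∀ n : ℕ,
      P {ω | (∀ k < n, R k ω < R n ω) ∧ ∀ i, x i ≤ R n ω * S ω i} =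
        ∫⁻ r, ENNReal.ofReal (max 0 (1 - (∑ i, x i) / r) ^ (d - 1) * F r ^ n) ∂μ) ∧
    (∑' n : ℕ, P {ω | (∀ k < n, R k ω < R n ω) ∧ ∀ i, x i ≤ R n ω * S ω i}) =
      ∫⁻ r, ENNReal.ofReal (max 0 (1 - (∑ i, x i) / r) ^ (d - 1) * (1 - F r)⁻¹) ∂μ := by
  have : IsProbabilityMeasure μ :=
    hident 0 ▸ Measure.isProbabilityMeasure_map (hRmeas 0).aemeasurable
  obtain rfl : F = cdf μ := funext fun r => by rw [hF, cdf_eq_real, measureReal_def]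
  have hμpos : ∀ᵐ r ∂μ, 0 < r := by
    rw [← hident 0, ae_map_iff (hRmeas 0).aemeasurable measurableSet_Ioi]
    exact .of_forall (hpos 0)
  have hB : MeasurableSet {p : ℝ × (Fin d → ℝ) | ∀ i, x i ≤ p.1 * p.2 i} := by
    simp only [ofPred_forall]
    exact .iInter fun i => measurableSet_le (by fun_prop) (by fun_prop)
  have hrecord : ∀ n : ℕ,
      P {ω | (∀ k < n, R k ω < R n ω) ∧ ∀ i, x i ≤ R n ω * S ω i} =
        ∫⁻ r, ENNReal.ofReal (max 0 (1 - (∑ i, x i) / r) ^ (d - 1) * cdf μ r ^ n) ∂μ := by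
    intro n
    refine (measure_record_and_mem_eq_lintegral hRmeas hRiid hident hSmeas hindep n hB).trans
      (lintegral_congr_ae ?_)
    filter_upwards [hμpos] with r hr
    rw [measure_forall_le_mul_eq_ofReal hSmeas hsimplex hx hr,
      measure_Iio_eq_ofReal_cdf μ hFcont, ← ENNReal.ofReal_pow (cdf_nonneg μ r),
      ← ENNReal.ofReal_mul (by positivity)]
  refine ⟨hrecord, ?_⟩
  rw [tsum_congr hrecord, ← lintegral_tsum fun n => by fun_prop]
  refine lintegral_congr_ae ?_
  filter_upwards [ae_cdf_lt_one μ hFcont] with r hr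
  exact tsum_ofReal_mul_pow (by positivity) (cdf_nonneg μ r) hr

/-- Let `X_n = R_n · S` with `(R_n)` i.i.d. with law `μ` and continuous cdf
`F_R` on `(0,∞)`, and `S` uniform on the unit simplex, independent of the whole
sequence `(R_n)`.  Observation `n` is a record if `R_n > R_k` for all `k < n`
(there are `n` previous observations).  Then the probability that observation
`n` is a record falling in `[x_1,∞) × ⋯ × [x_d,∞)` equals
`∫ max(0, 1 - (∑ x_i)/r)^{d-1} F_R(r)^n dμ(r)`, and the expected number of
records in that set equals `∫ max(0, 1 - (∑ x_i)/r)^{d-1} (1 - F_R r)⁻¹ dμ(r)`. -/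
theorem stmt16 (d : ℕ) (hd : 0 < d)
    {Ω : Type*} [MeasurableSpace Ω] (P : Measure Ω) [IsProbabilityMeasure P]
    (R : ℕ → Ω → ℝ) (hRmeas : ∀ n, Measurable (R n))
    (hRiid : iIndepFun R P)
    (μ : Measure ℝ) (hident : ∀ n, Measure.map (R n) P = μ)
    (hpos : ∀ n ω, 0 < R n ω)
    (F : ℝ → ℝ) (hF : ∀ r, F r = (μ (Iic r)).toReal) (hFcont : Continuous F)
    (S : Ω → Fin d → ℝ) (hSmeas : Measurable S)
    (hindep : IndepFun S (fun ω => fun n => R n ω) P)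
    (hsimplex : ∀ s : Fin d → ℝ, (∀ i, 0 ≤ s i) →
      P {ω | ∀ i, s i < S ω i} = ENNReal.ofReal (max 0 (1 - ∑ i, s i) ^ (d - 1)))
    (x : Fin d → ℝ) (hx : ∀ i, 0 ≤ x i) :
    (∀ n : ℕ,
      P {ω | (∀ k < n, R k ω < R n ω) ∧ ∀ i, x i ≤ R n ω * S ω i} =
        ∫⁻ r, ENNReal.ofReal (max 0 (1 - (∑ i, x i) / r) ^ (d - 1) * F r ^ n) ∂μ) ∧
    (∑' n : ℕ, P {ω | (∀ k < n, R k ω < R n ω) ∧ ∀ i, x i ≤ R n ω * S ω i}) =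
      ∫⁻ r, ENNReal.ofReal (max 0 (1 - (∑ i, x i) / r) ^ (d - 1) * (1 - F r)⁻¹) ∂μ :=
  stmt16_general d P R hRmeas hRiid μ hident hpos F hF hFcont S hSmeas hindep hsimplex x hx
end
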